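/- arXiv:1302.4714 — 9 statements merged into one kernel-verified Lean document; each statement's English description precedes it below -/
import Mathlib

section
/- Define z_p(x',n) = ((x'+p)ⁿ + pⁿ)^{1/n} for real x' ≥ 1, integer p ≥ 0, and integer n ≥ 2. Then the step function Step(x',p,n) = z_{p+1}(x',n) − z_p(x',n) satisfies 1 < Step(x',p,n) < 2^{1/n} for all p ≥ 0. -/
open Real Finset

lemma core_le {U V : ℝ} (hU : 0 ≤ U) (hV : 0 ≤ V) {p : ℝ} (h0 : 0 ≤ p) (h1 : p ≤ 1) :
    U ^ p + V ^ p ≤ 2 * (((U + V) / 2) ^ p) := by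
  have h := (Real.concaveOn_rpow h0 h1).2 (Set.mem_Ici.2 hU) (Set.mem_Ici.2 hV)
    (by norm_num : (0:ℝ) ≤ 1/2) (by norm_num : (0:ℝ) ≤ 1/2) (by norm_num)
  simp only [smul_eq_mul] at h
  have he : (1:ℝ)/2 * U + 1/2 * V = (U + V)/2 := by ring
  rw [he] at h; linarith

lemma core_lt {U V : ℝ} (hU : 0 ≤ U) (hV : 0 ≤ V) (hUV : U ≠ V) {p : ℝ} (h0 : 0 < p)
    (h1 : p < 1) : U ^ p + V ^ p < 2 * (((U + V) / 2) ^ p) := by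
  have h := (Real.strictConcaveOn_rpow h0 h1).2 (Set.mem_Ici.2 hU) (Set.mem_Ici.2 hV)
    hUV (by norm_num : (0:ℝ) < 1/2) (by norm_num : (0:ℝ) < 1/2) (by norm_num)
  simp only [smul_eq_mul] at h
  have he : (1:ℝ)/2 * U + 1/2 * V = (U + V)/2 := by ring
  rw [he] at h; linarith

lemma rpow_bookkeep {A : ℝ} (hA : 0 < A) {n k : ℕ} (hn : n ≠ 0) (hk : k ≤ n) :
    (A ^ ((1:ℝ)/n)) ^ k * ((2:ℝ) ^ ((1:ℝ)/n)) ^ (n - k)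
      = 2 * ((A / 2) ^ ((k:ℝ)/n)) := by
  have hn0 : (n:ℝ) ≠ 0 := Nat.cast_ne_zero.2 hn
  have h1 : (A ^ ((1:ℝ)/n)) ^ k = A ^ ((k:ℝ)/n) := by
    rw [← Real.rpow_natCast (A ^ ((1:ℝ)/n)) k, ← Real.rpow_mul hA.le]
    congr 1; field_simp
  have h2 : ((2:ℝ) ^ ((1:ℝ)/n)) ^ (n - k) = (2:ℝ) ^ ((1:ℝ) - (k:ℝ)/n) := by
    rw [← Real.rpow_natCast ((2:ℝ) ^ ((1:ℝ)/n)) (n - k), ← Real.rpow_mul (by norm_num)]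
    congr 1
    rw [Nat.cast_sub hk]
    field_simp
  rw [h1, h2, Real.div_rpow hA.le (by norm_num), Real.rpow_sub (by norm_num), Real.rpow_one]
  have h3 : (2:ℝ) ^ ((k:ℝ)/n) ≠ 0 := (Real.rpow_pos_of_pos (by norm_num) _).ne'
  field_simp

lemma pow_rpow_div {u : ℝ} (hu : 0 ≤ u) {n k : ℕ} (hn : n ≠ 0) :
    ((u ^ n : ℝ)) ^ ((k:ℝ)/n) = u ^ k := by
  have hn0 : (n:ℝ) ≠ 0 := Nat.cast_ne_zero.2 hn
  rw [← Real.rpow_natCast u n, ← Real.rpow_mul hu]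
  have he : (n:ℝ) * ((k:ℝ)/n) = (k:ℝ) := by field_simp
  rw [he, Real.rpow_natCast]

lemma key_le {u v : ℝ} (hu0 : 0 < u) (hv : 0 ≤ v) {n k : ℕ} (hn : n ≠ 0) (hk : k ≤ n) :
    u ^ k + v ^ k ≤ ((u^n + v^n) ^ ((1:ℝ)/n)) ^ k * ((2:ℝ) ^ ((1:ℝ)/n)) ^ (n - k) := by
  have hA : (0:ℝ) < u^n + v^n :=
    add_pos_of_pos_of_nonneg (pow_pos hu0 n) (pow_nonneg hv n)
  have hnR : (0:ℝ) < n := Nat.cast_pos.2 (Nat.pos_of_ne_zero hn)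
  rw [rpow_bookkeep hA hn hk]
  have h := core_le (pow_nonneg hu0.le n) (pow_nonneg hv n)
    (p := (k:ℝ)/n) (by positivity) ((div_le_one hnR).2 (Nat.cast_le.2 hk))
  rwa [pow_rpow_div hu0.le hn, pow_rpow_div hv hn] at h

lemma key_lt {u v : ℝ} (hu0 : 0 < u) (hv : 0 ≤ v) {n k : ℕ} (hk0 : 0 < k) (hk : k < n)
    (hUV : u ^ n ≠ v ^ n) :
    u ^ k + v ^ k < ((u^n + v^n) ^ ((1:ℝ)/n)) ^ k * ((2:ℝ) ^ ((1:ℝ)/n)) ^ (n - k) := by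
  have hn : n ≠ 0 := (hk0.trans hk).ne'
  have hA : (0:ℝ) < u^n + v^n :=
    add_pos_of_pos_of_nonneg (pow_pos hu0 n) (pow_nonneg hv n)
  have hnR : (0:ℝ) < n := Nat.cast_pos.2 (Nat.pos_of_ne_zero hn)
  rw [rpow_bookkeep hA hn hk.le]
  have h := core_lt (pow_nonneg hu0.le n) (pow_nonneg hv n) hUV
    (p := (k:ℝ)/n) (by positivity) ((div_lt_one hnR).2 (Nat.cast_lt.2 hk))
  rwa [pow_rpow_div hu0.le hn, pow_rpow_div hv hn] at h

lemma claimA {u v a : ℝ} (hu0 : 0 < u) (hv : 0 ≤ v) (ha0 : 0 < a) {n : ℕ} (hn : n ≠ 0)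
    (han : a ^ n = u ^ n + v ^ n) {k : ℕ} (hk : k ≤ n) : a ^ k ≤ u ^ k + v ^ k := by
  have hua : u ≤ a := by
    refine le_of_pow_le_pow_left₀ hn ha0.le ?_
    rw [han]; nlinarith [pow_nonneg hv n]
  have hva : v ≤ a := by
    refine le_of_pow_le_pow_left₀ hn ha0.le ?_
    rw [han]; nlinarith [pow_pos hu0 n]
  have h1 : a ^ k * a ^ (n - k) = u ^ n + v ^ n := by
    rw [← pow_add, Nat.add_sub_cancel' hk, han]
  have e1 : u ^ n = u ^ k * u ^ (n - k) := by rw [← pow_add, Nat.add_sub_cancel' hk]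
  have e2 : v ^ n = v ^ k * v ^ (n - k) := by rw [← pow_add, Nat.add_sub_cancel' hk]
  have h2 : u ^ n + v ^ n ≤ (u ^ k + v ^ k) * a ^ (n - k) := by
    rw [e1, e2, add_mul]
    gcongr
  have h3 : (0:ℝ) < a ^ (n - k) := pow_pos ha0 _
  have h4 : a ^ k * a ^ (n - k) ≤ (u ^ k + v ^ k) * a ^ (n - k) := by rw [h1]; exact h2
  exact le_of_mul_le_mul_right h4 h3

lemma lemmaA {u v a : ℝ} (hu : 1 ≤ u) (hv : 0 ≤ v) (ha0 : 0 < a) {n : ℕ} (hn : 2 ≤ n)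
    (han : a ^ n = u ^ n + v ^ n) : (a + 1) ^ n < (u + 1) ^ n + (v + 1) ^ n := by
  have hu0 : (0:ℝ) < u := lt_of_lt_of_le one_pos hu
  rw [add_pow a 1 n, add_pow u 1 n, add_pow v 1 n, ← Finset.sum_add_distrib]
  refine Finset.sum_lt_sum (fun i hi => ?_) ⟨0, Finset.mem_range.2 (by omega), ?_⟩
  · have hi' : i ≤ n := Nat.lt_succ_iff.1 (Finset.mem_range.1 hi)
    simp only [one_pow, mul_one]
    rw [← add_mul]
    exact mul_le_mul_of_nonneg_right (claimA hu0 hv ha0 (by omega) han hi')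
      (Nat.cast_nonneg _)
  · simp only [pow_zero, one_pow, one_mul, Nat.choose_zero_right, Nat.cast_one, mul_one]
    norm_num

lemma lemmaB {u v a c : ℝ} (hu : 1 ≤ u) (hv : 0 ≤ v) (huv : v < u) {n : ℕ} (hn : 2 ≤ n)
    (ha : a = (u ^ n + v ^ n) ^ ((1:ℝ)/n)) (hc : c = (2:ℝ) ^ ((1:ℝ)/n)) :
    (u + 1) ^ n + (v + 1) ^ n < (a + c) ^ n := by
  have hu0 : (0:ℝ) < u := lt_of_lt_of_le one_pos hu
  have hn0 : n ≠ 0 := by omega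
  rw [add_pow a c n, add_pow u 1 n, add_pow v 1 n, ← Finset.sum_add_distrib]
  refine Finset.sum_lt_sum (fun i hi => ?_) ⟨1, Finset.mem_range.2 (by omega), ?_⟩
  · have hi' : i ≤ n := Nat.lt_succ_iff.1 (Finset.mem_range.1 hi)
    simp only [one_pow, mul_one]
    rw [← add_mul, ha, hc]
    exact mul_le_mul_of_nonneg_right (key_le hu0 hv hn0 hi') (Nat.cast_nonneg _)
  · simp only [one_pow, mul_one, pow_one]
    rw [← add_mul, ha, hc]
    refine mul_lt_mul_of_pos_right ?_ ?_
    · have := key_lt (v := v) hu0 hv (k := 1) one_pos (by omega)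
        (ne_of_gt (pow_lt_pow_left₀ huv hv hn0))
      simpa using this
    · have : 0 < n.choose 1 := Nat.choose_pos (by omega)
      exact_mod_cast this

/-- The step function of the branch z_p(x',n) lies strictly between 1 and 2^(1/n). -/
theorem stmt_3 (x' : ℝ) (hx : 1 ≤ x') (n : ℕ) (hn : 2 ≤ n) (p : ℕ) :
    1 < ((x' + p + 1) ^ n + ((p : ℝ) + 1) ^ n) ^ ((1 : ℝ) / n)
        - ((x' + p) ^ n + (p : ℝ) ^ n) ^ ((1 : ℝ) / n) ∧
    ((x' + p + 1) ^ n + ((p : ℝ) + 1) ^ n) ^ ((1 : ℝ) / n)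
        - ((x' + p) ^ n + (p : ℝ) ^ n) ^ ((1 : ℝ) / n) < (2 : ℝ) ^ ((1 : ℝ) / n) := by
  have hn0 : n ≠ 0 := by omega
  set u : ℝ := x' + p with hu_def
  set v : ℝ := (p : ℝ) with hv_def
  have hv : 0 ≤ v := Nat.cast_nonneg p
  have hu : 1 ≤ u := by simp only [hu_def]; linarith
  have huv : v < u := by simp only [hu_def, hv_def]; linarith
  have hu0 : (0:ℝ) < u := lt_of_lt_of_le one_pos hu
  have hA : (0:ℝ) < u ^ n + v ^ n :=
    add_pos_of_pos_of_nonneg (pow_pos hu0 n) (pow_nonneg hv n)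
  have hB : (0:ℝ) < (u + 1) ^ n + (v + 1) ^ n :=
    add_pos_of_pos_of_nonneg (pow_pos (by linarith) n) (pow_pos (by linarith) n).le
  set a : ℝ := (u ^ n + v ^ n) ^ ((1:ℝ)/n) with ha_def
  set b : ℝ := ((u + 1) ^ n + (v + 1) ^ n) ^ ((1:ℝ)/n) with hb_def
  set c : ℝ := (2:ℝ) ^ ((1:ℝ)/n) with hc_def
  have ha0 : 0 < a := Real.rpow_pos_of_pos hA _
  have hb0 : 0 < b := Real.rpow_pos_of_pos hB _
  have hc0 : 0 < c := Real.rpow_pos_of_pos (by norm_num) _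
  have han : a ^ n = u ^ n + v ^ n := by
    rw [ha_def, one_div]; exact Real.rpow_inv_natCast_pow hA.le hn0
  have hbn : b ^ n = (u + 1) ^ n + (v + 1) ^ n := by
    rw [hb_def, one_div]; exact Real.rpow_inv_natCast_pow hB.le hn0
  constructor
  · have h1 : (a + 1) ^ n < b ^ n := by
      rw [hbn]; exact lemmaA hu hv ha0 hn han
    have := lt_of_pow_lt_pow_left₀ n hb0.le h1
    linarith
  · have h2 : b ^ n < (a + c) ^ n := by
      rw [hbn]; exact lemmaB hu hv huv hn ha_def hc_def
    have := lt_of_pow_lt_pow_left₀ n (by linarith : (0:ℝ) ≤ a + c) h2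
    linarith
end

section
/- For real x' ≥ 1 and integer n ≥ 2, the function p ↦ ((x'+p+1)ⁿ + (p+1)ⁿ)^{1/n} − ((x'+p)ⁿ + pⁿ)^{1/n} is strictly increasing in p for p ≥ 1 (real p). -/
/-!
Write `g(t) = ((a + t)ⁿ + tⁿ)^(1/n)` with `a = x'`; the function in the theorem is
`p ↦ g (p + 1) - g p`, and unit increments of a strictly convex function are strictly increasing.
Strict convexity comes from the derivative
`g' = ((a + t)ⁿ⁻¹ + tⁿ⁻¹) · ((a + t)ⁿ + tⁿ)^(1/n - 1)`, whose own derivative is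
`(n - 1) a² (a + t)ⁿ⁻² tⁿ⁻² ((a + t)ⁿ + tⁿ)^(1/n - 2) > 0` for `t > 0`, by the identity
`(xᵏ + yᵏ)(xᵏ⁺² + yᵏ⁺²) - (xᵏ⁺¹ + yᵏ⁺¹)² = xᵏ yᵏ (x - y)²`.
-/

open Set

theorem StrictConvexOn.sub_lt_sub_add {𝕜 : Type*} [Field 𝕜] [LinearOrder 𝕜]
    [IsStrictOrderedRing 𝕜] {s : Set 𝕜} {f : 𝕜 → 𝕜} (hf : StrictConvexOn 𝕜 s f) {p q d : 𝕜}
    (hp : p ∈ s) (hqd : q + d ∈ s) (hpq : p < q) (hd : 0 < d) :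
    f (p + d) - f p < f (q + d) - f q := by
  have h₁ := hf.secant_strict_mono_aux1 hp hqd (y := p + d) (by linarith) (by linarith)
  have h₂ := hf.secant_strict_mono_aux1 hp hqd hpq (by linarith)
  have hsum : (q + d - p) * (f (p + d) + f q) < (q + d - p) * (f p + f (q + d)) := by
    linear_combination h₁ + h₂
  linarith [lt_of_mul_lt_mul_left hsum (by linarith : (0 : 𝕜) ≤ q + d - p)]

noncomputable section

def powSum (a : ℝ) (k : ℕ) (t : ℝ) : ℝ := (a + t) ^ k + t ^ k

def powSumRoot (a : ℝ) (n : ℕ) (t : ℝ) : ℝ := powSum a n t ^ ((1 : ℝ) / n)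

end

variable {a t : ℝ}

theorem powSum_pos (k : ℕ) (ha : 0 < a) (ht : 0 ≤ t) : 0 < powSum a k t := by
  have : 0 < a + t := by linarith
  unfold powSum
  positivity

theorem powSum_mul_sub_sq (k : ℕ) :
    powSum a k t * powSum a (k + 2) t - powSum a (k + 1) t ^ 2
      = a ^ 2 * ((a + t) ^ k * t ^ k) := by
  unfold powSum
  ring

theorem hasDerivAt_powSum (k : ℕ) :
    HasDerivAt (powSum a (k + 1)) ((k + 1) * powSum a k t) t := by
  have hshift := ((hasDerivAt_id t).const_add a).pow (k + 1)
  refine (hshift.add (hasDerivAt_pow (k + 1) t)).congr_deriv ?_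
  simp only [powSum, id, Nat.add_sub_cancel]
  push_cast
  ring

theorem hasDerivAt_powSumRoot (k : ℕ) (ht : powSum a (k + 1) t ≠ 0) :
    HasDerivAt (powSumRoot a (k + 1))
      (powSum a k t * powSum a (k + 1) t ^ ((1 : ℝ) / (k + 1) - 1)) t := by
  have := (hasDerivAt_powSum k).rpow_const (p := (1 : ℝ) / (k + 1)) (Or.inl ht)
  unfold powSumRoot
  push_cast
  refine this.congr_deriv ?_
  field_simp

theorem hasDerivAt_deriv_powSumRoot (m : ℕ) (ht : powSum a (m + 2) t ≠ 0) :
    HasDerivAt (fun s => powSum a (m + 1) s * powSum a (m + 2) s ^ ((1 : ℝ) / (m + 2) - 1))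
      ((m + 1) * a ^ 2 * ((a + t) ^ m * t ^ m) * powSum a (m + 2) t ^ ((1 : ℝ) / (m + 2) - 2))
      t := by
  set e : ℝ := 1 / (m + 2)
  have hpow := (hasDerivAt_powSum (a := a) (t := t) (m + 1)).rpow_const (p := e - 1) (Or.inl ht)
  refine ((hasDerivAt_powSum (a := a) (t := t) m).mul hpow).congr_deriv ?_
  have hsplit :
      powSum a (m + 2) t ^ (e - 1) = powSum a (m + 2) t ^ (e - 2) * powSum a (m + 2) t := by
    rw [← Real.rpow_add_one ht]
    ring_nf
  have hcoef : ((m : ℝ) + 2) * (e - 1) = -(m + 1) := by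
    simp only [e]
    field_simp
    ring
  clear_value e
  rw [hsplit, show e - 1 - 1 = e - 2 by ring]
  push_cast
  linear_combination
    (m + 1 : ℝ) * powSum a (m + 2) t ^ (e - 2) * powSum_mul_sub_sq (a := a) (t := t) m
      + powSum a (m + 1) t ^ 2 * powSum a (m + 2) t ^ (e - 2) * hcoef

theorem strictMonoOn_deriv_powSumRoot (m : ℕ) (ha : 0 < a) :
    StrictMonoOn (fun s => powSum a (m + 1) s * powSum a (m + 2) s ^ ((1 : ℝ) / (m + 2) - 1))
      (Ioi 0) := by
  have hderiv (t : ℝ) (ht : 0 < t) :=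
    hasDerivAt_deriv_powSumRoot m (powSum_pos (m + 2) ha ht.le).ne'
  refine strictMonoOn_of_deriv_pos (convex_Ioi 0)
    (fun t ht => (hderiv t ht).continuousAt.continuousWithinAt) fun t ht => ?_
  rw [interior_Ioi, mem_Ioi] at ht
  rw [(hderiv t ht).deriv]
  have := powSum_pos (m + 2) ha ht.le
  have : 0 < a + t := by linarith
  positivity

theorem strictConvexOn_powSumRoot (ha : 0 < a) {n : ℕ} (hn : 2 ≤ n) :
    StrictConvexOn ℝ (Ici 0) (powSumRoot a n) := by
  obtain ⟨m, rfl⟩ := Nat.exists_eq_add_of_le' hn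
  have hderiv (t : ℝ) (ht : 0 ≤ t) : HasDerivAt (powSumRoot a (m + 2))
      (powSum a (m + 1) t * powSum a (m + 2) t ^ ((1 : ℝ) / (m + 2) - 1)) t := by
    convert hasDerivAt_powSumRoot (m + 1) (powSum_pos (m + 2) ha ht).ne' using 4
    push_cast
    ring
  refine StrictMonoOn.strictConvexOn_of_deriv (convex_Ici 0)
    (fun t ht => (hderiv t ht).continuousAt.continuousWithinAt) ?_
  rw [interior_Ici]
  exact (strictMonoOn_deriv_powSumRoot m ha).congr fun t ht => (hderiv t (le_of_lt ht)).deriv.symm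

/-- The step function is strictly increasing in the real parameter p ≥ 1. -/
theorem stmt_4 (x' : ℝ) (hx : 1 ≤ x') (n : ℕ) (hn : 2 ≤ n) :
    StrictMonoOn (fun p : ℝ =>
      ((x' + p + 1) ^ n + (p + 1) ^ n) ^ ((1 : ℝ) / n)
        - ((x' + p) ^ n + p ^ n) ^ ((1 : ℝ) / n)) (Set.Ici (1 : ℝ)) := by
  have hconv := (strictConvexOn_powSumRoot (by linarith) hn).subset
    (Ici_subset_Ici.2 zero_le_one) (convex_Ici 1)
  intro p hp q hq hpq
  have := hconv.sub_lt_sub_add hp (mem_Ici.2 (by linarith [mem_Ici.1 hq])) hpq one_pos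
  simpa only [powSumRoot, powSum, add_assoc] using this
end

section
/- For every real x' ≥ 1 and integer n ≥ 2, ((x'+1)ⁿ + 1)^{1/n} − x' < 2^{1/n}; equivalently, (x'+1)ⁿ + 1 < (x' + 2^{1/n})ⁿ. -/
/-- Step(x',0,n) < 2^(1/n), equivalently (x'+1)ⁿ + 1 < (x' + 2^(1/n))ⁿ. -/
theorem stmt_6 (x' : ℝ) (hx : 1 ≤ x') (n : ℕ) (hn : 2 ≤ n) :
    ((x' + 1) ^ n + 1) ^ ((1 : ℝ) / n) - x' < (2 : ℝ) ^ ((1 : ℝ) / n) ∧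
    (x' + 1) ^ n + 1 < (x' + (2 : ℝ) ^ ((1 : ℝ) / n)) ^ n := by
  have hn0 : n ≠ 0 := by omega
  have hnR : (0:ℝ) < (n:ℝ) := by exact_mod_cast Nat.pos_of_ne_zero hn0
  set c : ℝ := (2:ℝ) ^ ((1:ℝ)/n) with hcdef
  have hlog2 : (0.6931471803:ℝ) < Real.log 2 := Real.log_two_gt_d9
  -- lower bound on c
  have hc_ge : 1 + Real.log 2 / n ≤ c := by
    have := Real.add_one_le_exp (Real.log 2 * ((1:ℝ)/n))
    rw [hcdef, Real.rpow_def_of_pos (by norm_num)]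
    rw [mul_one_div] at this ⊢
    linarith
  have hd : Real.log 2 / n ≤ c - 1 := by linarith
  have hdpos : 0 < c - 1 := by
    have : 0 < Real.log 2 / n := by positivity
    linarith
  set a : ℝ := x' + 1 with hadef
  have ha2 : (2:ℝ) ≤ a := by simp [hadef]; linarith
  have hapos : (0:ℝ) < a := by linarith
  -- Bernoulli
  have hbern : 1 + (n:ℝ) * ((c-1)/a) ≤ (1 + (c-1)/a) ^ n := by
    apply one_add_mul_le_pow
    have : (0:ℝ) < (c-1)/a := by positivity
    linarith
  have hexp : (x' + c) ^ n = a ^ n * (1 + (c-1)/a) ^ n := by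
    rw [← mul_pow]
    congr 1
    field_simp
    ring
  have hge : a ^ n + (n:ℝ) * a^(n-1) * (c-1) ≤ (x' + c) ^ n := by
    rw [hexp]
    have h1 : a ^ n * (1 + (n:ℝ) * ((c-1)/a)) ≤ a ^ n * (1 + (c-1)/a) ^ n := by
      apply mul_le_mul_of_nonneg_left hbern (by positivity)
    have h2 : a ^ n * (1 + (n:ℝ) * ((c-1)/a)) = a ^ n + (n:ℝ) * a^(n-1) * (c-1) := by
      have hpow : a ^ n = a ^ (n-1) * a := by
        rw [← pow_succ]
        congr 1
        omega
      rw [hpow]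
      field_simp
    linarith
  -- n * a^(n-1) * (c-1) > 1
  have hmain : 1 < (n:ℝ) * a^(n-1) * (c-1) := by
    have hpow2 : (2:ℝ)^(n-1) ≤ a^(n-1) := pow_le_pow_left₀ (by norm_num) ha2 _
    have hpow2' : (2:ℝ) ≤ (2:ℝ)^(n-1) := by
      calc (2:ℝ) = 2^1 := (pow_one 2).symm
      _ ≤ 2^(n-1) := pow_le_pow_right₀ (by norm_num) (by omega)
    have h3 : (n:ℝ) * (2:ℝ) * (Real.log 2 / n) ≤ (n:ℝ) * a^(n-1) * (c-1) := by
      apply mul_le_mul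
      · apply mul_le_mul_of_nonneg_left (le_trans hpow2' hpow2) (by positivity)
      · exact hd
      · positivity
      · positivity
    have h4 : (n:ℝ) * (2:ℝ) * (Real.log 2 / n) = 2 * Real.log 2 := by
      field_simp
    rw [h4] at h3
    linarith
  have hkey : a ^ n + 1 < (x' + c) ^ n := by linarith
  refine ⟨?_, hkey⟩
  have hlt := Real.rpow_lt_rpow (x := a ^ n + 1) (z := (1:ℝ)/n) (by positivity) hkey
    (by positivity)
  rw [one_div, Real.pow_rpow_inv_natCast (by positivity) hn0] at hlt
  rw [one_div]
  linarith
end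

section
/- For every real x' ≥ 1 and integer n ≥ 2, ((x'+2)ⁿ + 2ⁿ)^{1/n} − ((x'+1)ⁿ + 1)^{1/n} > 1. -/
open Finset

/-- Lower bound: `n * y^(n-1) * (x - y) ≤ x^n - y^n` for `0 ≤ y ≤ x`. -/
lemma aux_low (x y : ℝ) (hy : 0 ≤ y) (hxy : y ≤ x) (n : ℕ) :
    (n : ℝ) * y ^ (n - 1) * (x - y) ≤ x ^ n - y ^ n := by
  have hid := geom_sum₂_mul x y n
  rw [← hid]
  apply mul_le_mul_of_nonneg_right _ (by linarith)
  calc (n : ℝ) * y ^ (n - 1) = ∑ _i ∈ range n, y ^ (n - 1) := by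
        rw [Finset.sum_const, card_range, nsmul_eq_mul]
    _ ≤ ∑ i ∈ range n, x ^ i * y ^ (n - 1 - i) := by
        apply Finset.sum_le_sum
        intro i hi
        rw [mem_range] at hi
        calc y ^ (n - 1) = y ^ i * y ^ (n - 1 - i) := by
              rw [← pow_add]; congr 1; omega
          _ ≤ x ^ i * y ^ (n - 1 - i) := by
              apply mul_le_mul_of_nonneg_right (pow_le_pow_left₀ hy hxy i)
              positivity

/-- Upper bound: `x^n - y^n ≤ n * x^(n-1) * (x - y)` for `0 ≤ y ≤ x`. -/
lemma aux_high (x y : ℝ) (hy : 0 ≤ y) (hxy : y ≤ x) (n : ℕ) :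
    x ^ n - y ^ n ≤ (n : ℝ) * x ^ (n - 1) * (x - y) := by
  have hx : 0 ≤ x := le_trans hy hxy
  have hid := geom_sum₂_mul x y n
  rw [← hid]
  apply mul_le_mul_of_nonneg_right _ (by linarith)
  calc ∑ i ∈ range n, x ^ i * y ^ (n - 1 - i)
      ≤ ∑ _i ∈ range n, x ^ (n - 1) := by
        apply Finset.sum_le_sum
        intro i hi
        rw [mem_range] at hi
        calc x ^ i * y ^ (n - 1 - i) ≤ x ^ i * x ^ (n - 1 - i) := by
              apply mul_le_mul_of_nonneg_left (pow_le_pow_left₀ hy hxy _)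
              positivity
          _ = x ^ (n - 1) := by rw [← pow_add]; congr 1; omega
    _ = (n : ℝ) * x ^ (n - 1) := by
        rw [Finset.sum_const, card_range, nsmul_eq_mul]

/-- Step(x',1,n) > 1. -/
theorem stmt_8 (x' : ℝ) (hx : 1 ≤ x') (n : ℕ) (hn : 2 ≤ n) :
    ((x' + 2) ^ n + 2 ^ n) ^ ((1 : ℝ) / n) - ((x' + 1) ^ n + 1) ^ ((1 : ℝ) / n) > 1 := by
  have h2eq : x' + 2 = x' + 1 + 1 := by ring
  rw [h2eq]
  set a : ℝ := x' + 1 with ha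
  have ha2 : (2 : ℝ) ≤ a := by linarith
  have ha0 : (0 : ℝ) < a := by linarith
  have hn0 : n ≠ 0 := by omega
  have hnn : (1 : ℝ) ≤ (n : ℝ) := by exact_mod_cast Nat.one_le_iff_ne_zero.mpr hn0
  have hP1 : (0 : ℝ) < a ^ n + 1 := by positivity
  have hP2 : (0 : ℝ) < (a + 1) ^ n + 2 ^ n := by positivity
  set B : ℝ := (a ^ n + 1) ^ ((1 : ℝ) / n) with hB
  set A : ℝ := ((a + 1) ^ n + 2 ^ n) ^ ((1 : ℝ) / n) with hA
  have hBpos : 0 < B := Real.rpow_pos_of_pos hP1 _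
  have hApos : 0 < A := Real.rpow_pos_of_pos hP2 _
  have hBn : B ^ n = a ^ n + 1 := by
    rw [hB, one_div, Real.rpow_inv_natCast_pow hP1.le hn0]
  have hAn : A ^ n = (a + 1) ^ n + 2 ^ n := by
    rw [hA, one_div, Real.rpow_inv_natCast_pow hP2.le hn0]
  -- B > a
  have haB : a < B := by
    by_contra h
    push_neg at h
    have := pow_le_pow_left₀ hBpos.le h n
    rw [hBn] at this
    nlinarith [pow_pos ha0 n]
  -- δ := B - a satisfies δ * n * a^(n-1) < 1  (strictly, since n ≥ 2 and B > a)
  have hkey : (n : ℝ) * a ^ (n - 1) * (B - a) < 1 := by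
    have hlow := aux_low B a ha0.le haB.le n
    rw [hBn] at hlow
    -- `hlow` gives ≤ 1; upgrade: use low bound with middle value
    -- use: n * a^(n-1) * (B - a) ≤ 1, need strict. Get strict from
    -- B^n - a^n = (geom sum) * (B - a) where geom sum > n * a^(n-1).
    have hid := geom_sum₂_mul B a n
    have hsum : (n : ℝ) * a ^ (n - 1) < ∑ i ∈ range n, B ^ i * a ^ (n - 1 - i) := by
      have h1 : ∀ i ∈ range n, a ^ (n - 1) ≤ B ^ i * a ^ (n - 1 - i) := by
        intro i hi
        rw [mem_range] at hi
        calc a ^ (n - 1) = a ^ i * a ^ (n - 1 - i) := by rw [← pow_add]; congr 1; omega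
          _ ≤ B ^ i * a ^ (n - 1 - i) := by
              apply mul_le_mul_of_nonneg_right (pow_le_pow_left₀ ha0.le haB.le i)
              positivity
      have h2 : a ^ (n - 1) < B ^ (n - 1) * a ^ (n - 1 - (n - 1)) := by
        have : a ^ (n - 1) < B ^ (n - 1) := by
          apply pow_lt_pow_left₀ haB ha0.le; omega
        simpa using this
      calc (n : ℝ) * a ^ (n - 1) = ∑ _i ∈ range n, a ^ (n - 1) := by
            rw [Finset.sum_const, card_range, nsmul_eq_mul]
        _ < ∑ i ∈ range n, B ^ i * a ^ (n - 1 - i) := by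
            apply Finset.sum_lt_sum h1
            exact ⟨n - 1, mem_range.mpr (by omega), h2⟩
    calc (n : ℝ) * a ^ (n - 1) * (B - a)
        < (∑ i ∈ range n, B ^ i * a ^ (n - 1 - i)) * (B - a) := by
          apply mul_lt_mul_of_pos_right hsum (by linarith)
      _ = B ^ n - a ^ n := hid
      _ = 1 := by rw [hBn]; ring
  -- δ ≤ 1/4
  have hδ : B - a ≤ 1 / 4 := by
    have h1 : (2 : ℝ) ≤ (n : ℝ) := by exact_mod_cast hn
    have h2 : (2 : ℝ) ≤ a ^ (n - 1) := by
      calc (2 : ℝ) = 2 ^ 1 := by norm_num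
        _ ≤ 2 ^ (n - 1) := by apply pow_le_pow_right₀ (by norm_num); omega
        _ ≤ a ^ (n - 1) := pow_le_pow_left₀ (by norm_num) ha2 _
    have h3 : (4 : ℝ) ≤ (n : ℝ) * a ^ (n - 1) := by nlinarith
    nlinarith [mul_nonneg (sub_nonneg.mpr h3) (sub_pos.mpr haB).le]
  -- B + 1 ≤ (13/8) * a
  have hB1 : B + 1 ≤ 13 / 8 * a := by nlinarith
  -- main: (B+1)^n < A^n
  have hmain : (B + 1) ^ n < (a + 1) ^ n + 2 ^ n := by
    have hhigh := aux_high (B + 1) (a + 1) (by linarith) (by linarith) n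
    have hbound : (n : ℝ) * (B + 1) ^ (n - 1) * (B - a) < 2 ^ n := by
      have h1 : (B + 1) ^ (n - 1) ≤ (13 / 8) ^ (n - 1) * a ^ (n - 1) := by
        rw [← mul_pow]
        exact pow_le_pow_left₀ (by linarith) hB1 _
      have h2 : (n : ℝ) * (B + 1) ^ (n - 1) * (B - a)
          ≤ (13 / 8) ^ (n - 1) * ((n : ℝ) * a ^ (n - 1) * (B - a)) := by
        have hδ0 : 0 < B - a := by linarith
        have hn0' : (0 : ℝ) < n := by linarith
        calc (n : ℝ) * (B + 1) ^ (n - 1) * (B - a)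
            ≤ (n : ℝ) * ((13 / 8) ^ (n - 1) * a ^ (n - 1)) * (B - a) := by
              apply mul_le_mul_of_nonneg_right _ hδ0.le
              exact mul_le_mul_of_nonneg_left h1 hn0'.le
          _ = (13 / 8) ^ (n - 1) * ((n : ℝ) * a ^ (n - 1) * (B - a)) := by ring
      have h3 : (13 / 8 : ℝ) ^ (n - 1) * ((n : ℝ) * a ^ (n - 1) * (B - a))
          < (13 / 8) ^ (n - 1) * 1 := by
        apply mul_lt_mul_of_pos_left hkey (by positivity)
      have h4 : (13 / 8 : ℝ) ^ (n - 1) * 1 ≤ 2 ^ n := by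
        rw [mul_one]
        calc (13 / 8 : ℝ) ^ (n - 1) ≤ 2 ^ (n - 1) :=
              pow_le_pow_left₀ (by norm_num) (by norm_num) _
          _ ≤ 2 ^ n := pow_le_pow_right₀ (by norm_num) (by omega)
      exact h2.trans_lt (h3.trans_le h4)
    nlinarith [hhigh, hbound]
  -- conclude
  have hlt : B + 1 < A := by
    have := hmain
    rw [← hAn] at this
    exact lt_of_pow_lt_pow_left₀ n hApos.le this
  linarith
end

section
/- If x, y, z are positive integers with x > y ≥ 1, n ≥ 3 an integer, and y < 1/(2^{1/n} − 1), then xⁿ + yⁿ ≠ zⁿ. -/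
/-!
The bound on `y` says exactly `y · 2^(1/n) < y + 1`, i.e. `(y + 1)^n - y^n > y^n`. A solution would
have `z ≥ x + 1`, so `(x + 1)^n - x^n ≤ z^n - x^n = y^n`; but `t ↦ (t + 1)^n - t^n` is increasing
and `x ≥ y`, so `(x + 1)^n - x^n ≥ (y + 1)^n - y^n > y^n`.
-/

-- monotonicity of `t ↦ (t + 1)^n - t^n`, stated without truncated subtraction
theorem succ_pow_add_pow_le_of_le (n : ℕ) {a b : ℕ} (hab : a ≤ b) :
    (a + 1) ^ n + b ^ n ≤ (b + 1) ^ n + a ^ n := by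
  induction n with
  | zero => simp
  | succ n ih =>
    have ha : a ^ n ≤ (a + 1) ^ n := Nat.pow_le_pow_left (Nat.le_succ a) n
    have hb : a ^ n ≤ b ^ n := Nat.pow_le_pow_left hab n
    have hb1 : (a + 1) ^ n ≤ (b + 1) ^ n := Nat.pow_le_pow_left (by omega) n
    simp only [pow_succ]
    nlinarith [Nat.mul_le_mul_right (b + 1) ih]

theorem two_mul_pow_lt_add_one_pow {y : ℝ} (hy : 0 ≤ y) {n : ℕ}
    (hbound : y < 1 / ((2 : ℝ) ^ ((1 : ℝ) / n) - 1)) : 2 * y ^ n < (y + 1) ^ n := by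
  rcases Nat.eq_zero_or_pos n with rfl | hn
  · -- for `n = 0` the right-hand side of `hbound` is `1 / 0 = 0`
    norm_num at hbound; linarith
  have hroot : (1 : ℝ) < 2 ^ ((1 : ℝ) / n) := Real.one_lt_rpow (by norm_num) (by positivity)
  have hstep : y * 2 ^ ((1 : ℝ) / n) < y + 1 := by
    have := (lt_div_iff₀ (sub_pos.mpr hroot)).mp hbound
    nlinarith
  calc 2 * y ^ n = (y * 2 ^ ((1 : ℝ) / n)) ^ n := by
        rw [mul_pow, one_div, Real.rpow_inv_natCast_pow (by norm_num) hn.ne', mul_comm]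
    _ < (y + 1) ^ n := pow_lt_pow_left₀ hstep (by positivity) hn.ne'

theorem stmt_9_general (x y z n : ℕ) (hy : 1 ≤ y) (hxy : y < x)
    (hbound : (y : ℝ) < 1 / ((2 : ℝ) ^ ((1 : ℝ) / n) - 1)) :
    x ^ n + y ^ n ≠ z ^ n := by
  intro heq
  have hgap : 2 * y ^ n < (y + 1) ^ n := by
    exact_mod_cast two_mul_pow_lt_add_one_pow (Nat.cast_nonneg y) hbound
  have hxz : x < z := lt_of_pow_lt_pow_left₀ n (Nat.zero_le z)
    (heq ▸ Nat.lt_add_of_pos_right (Nat.pow_pos (n := n) hy))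
  have hzpow : (x + 1) ^ n ≤ z ^ n := Nat.pow_le_pow_left hxz n
  have hmono := succ_pow_add_pow_le_of_le n hxy.le
  omega

/-- Partial Fermat result: no solutions when y < 1/(2^(1/n) − 1). -/
theorem stmt_9 (x y z n : ℕ) (hy : 1 ≤ y) (hxy : y < x) (hz : 0 < z) (hn : 3 ≤ n)
    (hbound : (y : ℝ) < 1 / ((2 : ℝ) ^ ((1 : ℝ) / n) - 1)) :
    x ^ n + y ^ n ≠ z ^ n :=
  stmt_9_general x y z n hy hxy hbound
end

section
/- Let x' ≥ 1 be an integer, n ≥ 2 an integer, and define z_p = ((x'+p)ⁿ + pⁿ)^{1/n} for integers p ≥ 0. If z_k and z_{k+i} are both integers for some k ≥ 0 and i ≥ 1, then i ≥ ⌈1/(2^{1/n} − 1)⌉. -/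
lemma aux_pow_le_10 (A B a : ℝ) (hA : 0 ≤ A) (hB : 0 ≤ B) (ha : 0 < a) {n j : ℕ}
    (hn : n ≠ 0) (hj : j ≤ n) (h : a ^ n = A ^ n + B ^ n) : a ^ j ≤ A ^ j + B ^ j := by
  have hAa : A ≤ a := by
    have : A ^ n ≤ a ^ n := by nlinarith [pow_nonneg hB n]
    exact le_of_pow_le_pow_left₀ hn ha.le this
  have hBa : B ≤ a := by
    have : B ^ n ≤ a ^ n := by nlinarith [pow_nonneg hA n]
    exact le_of_pow_le_pow_left₀ hn ha.le this
  have hA' : A ^ n ≤ a ^ (n - j) * A ^ j := by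
    calc A ^ n = A ^ (n - j) * A ^ j := by rw [← pow_add, Nat.sub_add_cancel hj]
    _ ≤ a ^ (n - j) * A ^ j := by
        have := pow_le_pow_left₀ hA hAa (n - j)
        have := pow_nonneg hA j
        nlinarith
  have hB' : B ^ n ≤ a ^ (n - j) * B ^ j := by
    calc B ^ n = B ^ (n - j) * B ^ j := by rw [← pow_add, Nat.sub_add_cancel hj]
    _ ≤ a ^ (n - j) * B ^ j := by
        have := pow_le_pow_left₀ hB hBa (n - j)
        have := pow_nonneg hB j
        nlinarith
  have e : a ^ (n - j) * a ^ j = a ^ n := by rw [← pow_add, Nat.sub_add_cancel hj]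
  have key : a ^ (n - j) * a ^ j ≤ a ^ (n - j) * (A ^ j + B ^ j) := by
    rw [e, h, mul_add]; linarith
  exact le_of_mul_le_mul_left key (pow_pos ha _)

/-- Two integer values on the same branch are at least ⌈1/(2^(1/n) − 1)⌉ apart. -/
theorem stmt_10 (x' n k i : ℕ) (hx : 1 ≤ x') (hn : 2 ≤ n) (hi : 1 ≤ i)
    (hk : ∃ m : ℤ, (((x' : ℝ) + k) ^ n + (k : ℝ) ^ n) ^ ((1 : ℝ) / n) = m)
    (hki : ∃ m : ℤ, (((x' : ℝ) + k + i) ^ n + ((k : ℝ) + i) ^ n) ^ ((1 : ℝ) / n) = m) :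
    (i : ℤ) ≥ ⌈1 / ((2 : ℝ) ^ ((1 : ℝ) / n) - 1)⌉ := by
  obtain ⟨m₁, hm₁⟩ := hk
  obtain ⟨m₂, hm₂⟩ := hki
  set A : ℝ := (x' : ℝ) + k with hAdef
  set B : ℝ := (k : ℝ) with hBdef
  have hn0 : (n : ℝ) ≠ 0 := by positivity
  have hA1 : (1 : ℝ) ≤ A := by
    have : (1 : ℝ) ≤ (x' : ℝ) := by exact_mod_cast hx
    have : (0 : ℝ) ≤ (k : ℝ) := Nat.cast_nonneg k
    simp only [hAdef]; push_cast; linarith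
  have hB0 : (0 : ℝ) ≤ B := Nat.cast_nonneg k
  have hi1 : (1 : ℝ) ≤ (i : ℝ) := by exact_mod_cast hi
  have hS1 : (0:ℝ) ≤ A ^ n + B ^ n := by positivity
  have hS2 : (0:ℝ) ≤ (A + i) ^ n + (B + i) ^ n := by positivity
  -- m₁ ^ n = A^n + B^n
  have hpow : ∀ (S : ℝ), 0 ≤ S → ∀ m : ℤ, S ^ ((1:ℝ)/n) = m → (m : ℝ) ^ n = S := by
    intro S hS m hm
    rw [← hm, ← Real.rpow_natCast (S ^ ((1:ℝ)/n)) n, ← Real.rpow_mul hS]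
    rw [one_div, inv_mul_cancel₀ hn0, Real.rpow_one]
  have hm₁n : (m₁ : ℝ) ^ n = A ^ n + B ^ n := hpow _ hS1 m₁ hm₁
  have hm₂n : (m₂ : ℝ) ^ n = (A + i) ^ n + (B + i) ^ n := hpow _ hS2 m₂ hm₂
  have hm₁pos : (0:ℝ) < (m₁ : ℝ) := by
    have h0 : (0:ℝ) ≤ (m₁ : ℝ) := hm₁ ▸ Real.rpow_nonneg hS1 _
    rcases h0.lt_or_eq with h | h
    · exact h
    · exfalso
      have h1 : (0:ℝ) ^ n = A ^ n + B ^ n := by rw [h, hm₁n]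
      have h2 : (0:ℝ) < A ^ n := by positivity
      have hz : (0:ℝ) ^ n = 0 := zero_pow (by omega : n ≠ 0)
      nlinarith [pow_nonneg hB0 n]
  have hm₂0 : (0:ℝ) ≤ (m₂ : ℝ) := hm₂ ▸ Real.rpow_nonneg hS2 _
  -- Step 1: (m₁ + i) < m₂
  have step1 : (m₁ : ℝ) + i < m₂ := by
    have hlt : ((m₁ : ℝ) + i) ^ n < (m₂ : ℝ) ^ n := by
      rw [hm₂n, add_pow A (i:ℝ) n, add_pow B (i:ℝ) n, add_pow (m₁:ℝ) (i:ℝ) n,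
        ← Finset.sum_add_distrib]
      apply Finset.sum_lt_sum
      · intro j hj
        have hjn : j ≤ n := by
          simp only [Finset.mem_range] at hj; omega
        have hle : (m₁ : ℝ) ^ j ≤ A ^ j + B ^ j :=
          aux_pow_le_10 A B _ (by linarith) hB0 hm₁pos (by omega) hjn hm₁n
        have : (0:ℝ) ≤ (i:ℝ) ^ (n - j) * (n.choose j : ℝ) := by positivity
        nlinarith
      · refine ⟨0, Finset.mem_range.mpr (by omega), ?_⟩
        simp only [pow_zero, one_mul, Nat.choose_zero_right, Nat.cast_one, mul_one,
          Nat.sub_zero]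
        have : (0:ℝ) < (i:ℝ) ^ n := by positivity
        linarith
    have hnn : (0:ℝ) ≤ (m₁ : ℝ) + i := by positivity
    exact lt_of_pow_lt_pow_left₀ n hm₂0 hlt
  -- Step 2: Minkowski: m₂ ≤ m₁ + 2^(1/n) * i
  have step2 : (m₂ : ℝ) ≤ (m₁ : ℝ) + (2:ℝ) ^ ((1:ℝ)/n) * i := by
    have mink := Real.Lp_add_le_of_nonneg (s := (Finset.univ : Finset (Fin 2)))
      (f := ![A, B]) (g := ![(i:ℝ), (i:ℝ)]) (p := (n:ℝ))
      (by exact_mod_cast Nat.one_le_cast.mpr (by omega : 1 ≤ n))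
      (by intro j _; fin_cases j <;> simp <;> linarith)
      (by intro j _; fin_cases j <;> simp <;> linarith)
    simp only [Fin.sum_univ_two, Matrix.cons_val_zero, Matrix.cons_val_one, Matrix.head_cons]
      at mink
    simp only [Real.rpow_natCast] at mink
    rw [hm₁, hm₂] at mink
    have h2i : ((i:ℝ) ^ n + (i:ℝ) ^ n) = 2 * (i:ℝ) ^ n := by ring
    have hii : ((i:ℝ) ^ n + (i:ℝ) ^ n) ^ ((1:ℝ)/n) = (2:ℝ) ^ ((1:ℝ)/n) * i := by
      rw [h2i, Real.mul_rpow (by norm_num) (by positivity), ← Real.rpow_natCast (i:ℝ) n,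
        ← Real.rpow_mul (Nat.cast_nonneg i), mul_one_div, div_self hn0, Real.rpow_one]
    rw [hii] at mink
    exact mink
  -- integer gap
  have hint : m₁ + i + 1 ≤ m₂ := by
    have : m₁ + (i:ℤ) < m₂ := by exact_mod_cast step1
    omega
  have hintR : (m₁ : ℝ) + i + 1 ≤ m₂ := by exact_mod_cast hint
  set c : ℝ := (2:ℝ) ^ ((1:ℝ)/n) with hc
  have hc1 : 1 < c := by
    rw [hc]
    apply Real.one_lt_rpow_iff_of_pos (by norm_num) |>.mpr
    left
    constructor
    · norm_num
    · positivity
  have hfin : (i:ℝ) + 1 ≤ c * i := by linarith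
  have hdiv : 1 / (c - 1) ≤ (i:ℝ) := by
    rw [div_le_iff₀ (by linarith)]
    nlinarith
  rw [ge_iff_le, Int.ceil_le]
  push_cast
  exact hdiv
end

section
/- Let x' ≥ 1 be real, n ≥ 2 an integer, and z_p = ((x'+p)ⁿ + pⁿ)^{1/n}. If the fractional part of z_k satisfies {z_k} < (2^{1/n} − 1)·j for some positive integer j with (2^{1/n} − 1)·j < 1, and z_{k+i} is an integer for some i ≥ 1, then i ≥ ⌈1/(2^{1/n} − 1)⌉ − j. -/
open Finset in
lemma aux_pow_rpow (x : ℝ) (hx : 0 ≤ x) (n : ℕ) (hn : n ≠ 0) :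
    (x ^ n) ^ ((1 : ℝ)/n) = x := by
  rw [← Real.rpow_natCast x n, ← Real.rpow_mul hx, mul_one_div,
    div_self (by exact_mod_cast hn), Real.rpow_one]

lemma aux_pow_mono (m n : ℕ) (hmn : m ≤ n) (hn : n ≠ 0) (a b s : ℝ)
    (ha : 0 ≤ a) (hb : 0 ≤ b) (hs : 0 < s) (h : s ^ n = a ^ n + b ^ n) :
    s ^ m ≤ a ^ m + b ^ m := by
  have hasn : a ≤ s := by
    refine le_of_pow_le_pow_left₀ hn hs.le ?_
    rw [h]; nlinarith [pow_nonneg hb n]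
  have hbsn : b ≤ s := by
    refine le_of_pow_le_pow_left₀ hn hs.le ?_
    rw [h]; nlinarith [pow_nonneg ha n]
  have key : s ^ m * s ^ (n - m) ≤ (a ^ m + b ^ m) * s ^ (n - m) := by
    rw [← pow_add, Nat.add_sub_cancel' hmn, h, add_mul]
    have h1 : a ^ n ≤ a ^ m * s ^ (n - m) := by
      calc a ^ n = a ^ m * a ^ (n - m) := by rw [← pow_add, Nat.add_sub_cancel' hmn]
        _ ≤ a ^ m * s ^ (n - m) := by
            exact mul_le_mul_of_nonneg_left (pow_le_pow_left₀ ha hasn _) (pow_nonneg ha m)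
    have h2 : b ^ n ≤ b ^ m * s ^ (n - m) := by
      calc b ^ n = b ^ m * b ^ (n - m) := by rw [← pow_add, Nat.add_sub_cancel' hmn]
        _ ≤ b ^ m * s ^ (n - m) := by
            exact mul_le_mul_of_nonneg_left (pow_le_pow_left₀ hb hbsn _) (pow_nonneg hb m)
    linarith
  exact le_of_mul_le_mul_right key (pow_pos hs _)

lemma aux_lower (a b s t : ℝ) (ha : 0 ≤ a) (hb : 0 ≤ b) (hs : 0 < s) (ht : 0 < t)
    (n : ℕ) (hn : n ≠ 0) (h : s ^ n = a ^ n + b ^ n) :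
    (s + t) ^ n < (a + t) ^ n + (b + t) ^ n := by
  rw [add_pow, add_pow, add_pow, ← Finset.sum_add_distrib]
  refine Finset.sum_lt_sum (fun m hm => ?_) ⟨0, Finset.mem_range.mpr (Nat.pos_of_ne_zero (by simp)), ?_⟩
  · have hmn : m ≤ n := Nat.lt_succ_iff.mp (Finset.mem_range.mp hm)
    have := aux_pow_mono m n hmn hn a b s ha hb hs h
    have htn : (0:ℝ) ≤ t ^ (n - m) * (n.choose m : ℝ) := by positivity
    nlinarith
  · simp only [pow_zero, one_mul, Nat.choose_zero_right, Nat.cast_one, mul_one, Nat.sub_zero]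
    nlinarith [pow_pos ht n]

lemma aux_upper (a b t : ℝ) (ha : 0 ≤ a) (hb : 0 ≤ b) (ht : 0 ≤ t) (n : ℕ) (hn : 1 ≤ n) :
    ((a + t) ^ n + (b + t) ^ n) ^ ((1:ℝ)/n) ≤
      (a ^ n + b ^ n) ^ ((1:ℝ)/n) + t * 2 ^ ((1:ℝ)/n) := by
  have hp : (1:ℝ) ≤ (n:ℝ) := by exact_mod_cast hn
  have H := Real.Lp_add_le_of_nonneg (p := (n:ℝ)) (s := Finset.univ) (f := ![a, b])
    (g := ![t, t]) hp (by intro i _; fin_cases i <;> simpa) (by intro i _; fin_cases i <;> simpa)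
  simp only [Fin.sum_univ_two, Matrix.cons_val_zero, Matrix.cons_val_one, Matrix.head_cons] at H
  simp only [Real.rpow_natCast] at H
  have h2 : (t ^ n + t ^ n) ^ ((1:ℝ)/n) = t * 2 ^ ((1:ℝ)/n) := by
    have : t ^ n + t ^ n = t ^ n * 2 := by ring
    rw [this, Real.mul_rpow (by positivity) (by norm_num),
      aux_pow_rpow t ht n (by omega), mul_comm]
  rw [h2] at H
  exact H

/-- If the fractional part of z_k is below (2^(1/n)−1) j, an integer value z_{k+i}
requires i ≥ ⌈1/(2^(1/n)−1)⌉ − j. -/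
theorem stmt_11 (x' : ℝ) (hx : 1 ≤ x') (n : ℕ) (hn : 2 ≤ n) (k i j : ℕ)
    (hj : 1 ≤ j) (hj1 : ((2 : ℝ) ^ ((1 : ℝ) / n) - 1) * j < 1) (hi : 1 ≤ i)
    (hfrac : Int.fract (((x' + k) ^ n + (k : ℝ) ^ n) ^ ((1 : ℝ) / n))
      < ((2 : ℝ) ^ ((1 : ℝ) / n) - 1) * j)
    (hint : ∃ m : ℤ, ((x' + k + i) ^ n + ((k : ℝ) + i) ^ n) ^ ((1 : ℝ) / n) = m) :
    (i : ℤ) ≥ ⌈1 / ((2 : ℝ) ^ ((1 : ℝ) / n) - 1)⌉ - j := by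
  obtain ⟨m, hm⟩ := hint
  have hn0 : (n:ℝ) ≠ 0 := by positivity
  set c : ℝ := (2 : ℝ) ^ ((1 : ℝ) / n) - 1 with hc
  have hcpos : 0 < c := by
    have h1 : (1:ℝ) < (2:ℝ) ^ ((1:ℝ)/n) := by
      refine (Real.one_lt_rpow_iff_of_pos (by norm_num)).mpr (Or.inl ⟨by norm_num, by positivity⟩)
    simp only [hc]; linarith
  set a : ℝ := x' + k with hadef
  set b : ℝ := (k : ℝ) with hbdef
  set t : ℝ := (i : ℝ) with htdef
  have ha1 : (1:ℝ) ≤ a := by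
    have : (0:ℝ) ≤ (k:ℝ) := Nat.cast_nonneg k
    simp only [hadef]; linarith
  have ha : 0 ≤ a := by linarith
  have hb : 0 ≤ b := Nat.cast_nonneg k
  have ht : 0 < t := by rw [htdef]; exact_mod_cast Nat.lt_of_lt_of_le Nat.zero_lt_one hi
  have hX : (0:ℝ) < a ^ n + b ^ n := by
    have := pow_pos (show (0:ℝ) < a by linarith) n
    nlinarith [pow_nonneg hb n]
  set s : ℝ := (a ^ n + b ^ n) ^ ((1:ℝ)/n) with hsdef
  have hspos : 0 < s := Real.rpow_pos_of_pos hX _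
  have hsn : s ^ n = a ^ n + b ^ n := by
    rw [hsdef, ← Real.rpow_natCast ((a ^ n + b ^ n) ^ ((1:ℝ)/n)) n,
      ← Real.rpow_mul hX.le, one_div, inv_mul_cancel₀ hn0, Real.rpow_one]
  set z : ℝ := ((a + t) ^ n + (b + t) ^ n) ^ ((1:ℝ)/n) with hzdef
  -- lower bound: s + t < z
  have hlow : s + t < z := by
    have h1 : (s + t) ^ n < (a + t) ^ n + (b + t) ^ n :=
      aux_lower a b s t ha hb hspos ht n (by omega) hsn
    calc s + t = ((s + t) ^ n) ^ ((1:ℝ)/n) :=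
          (aux_pow_rpow (s + t) (by linarith) n (by omega)).symm
      _ < z := by
          rw [hzdef]
          exact Real.rpow_lt_rpow (by positivity) h1 (by positivity)
  -- upper bound
  have hup : z ≤ s + t * (2:ℝ) ^ ((1:ℝ)/n) :=
    aux_upper a b t ha hb ht.le n (by omega)
  -- z = m
  have hzm : z = (m:ℝ) := hm
  set F : ℝ := Int.fract s with hF
  have hF0 : 0 ≤ F := Int.fract_nonneg s
  have hFlt : F < c * j := hfrac
  have hfloor : s = (⌊s⌋ : ℝ) + F := by rw [hF]; exact (Int.floor_add_fract s).symm
  set M : ℤ := m - ⌊s⌋ - i with hM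
  have hMr : (M : ℝ) = (z - s - t) + F := by
    push_cast [hM]
    rw [← hzm, htdef]
    linarith [hfloor]
  have hM1 : (1:ℤ) ≤ M := by
    have : (0:ℝ) < (M:ℝ) := by rw [hMr]; linarith
    exact_mod_cast (by exact_mod_cast this : (0:ℤ) < M)
  have hMup : (M:ℝ) < c * (t + j) := by
    have hzs : z ≤ s + t + t * c := by
      calc z ≤ s + t * (2:ℝ) ^ ((1:ℝ)/n) := hup
        _ = s + t + t * c := by rw [hc]; ring
    rw [hMr]; nlinarith [hzs, hFlt, ht.le, hcpos.le]
  have hkey : 1 < c * (t + j) := by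
    have : (1:ℝ) ≤ (M:ℝ) := by exact_mod_cast hM1
    linarith
  have hceil : ⌈1 / c⌉ ≤ (i : ℤ) + j := by
    apply Int.ceil_le.mpr
    have : 1 / c < t + j := by
      rw [div_lt_iff₀ hcpos]; linarith [mul_comm c (t + (j:ℝ))]
    push_cast
    rw [htdef] at this
    linarith
  omega
end

section
/- Let f be (n+1)-times differentiable on (a,b), x₀ ∈ (a,b), k ≠ 0 with x₀ + i·k ∈ (a,b) for i = 0,…,n. Then there exist ξ₁,…,ξₙ with ξᵢ strictly between x₀ and x₀ + i·k such that f⁽ⁿ⁾(x₀)·(−k)ⁿ = ∑_{i=0}^{n} C(n,i)(−1)^i f(x₀ + i·k) − ∑_{i=1}^{n} C(n,i)(−1)^i (f⁽ⁿ⁺¹⁾(ξᵢ)/(n+1)!)(i·k)^{n+1}. -/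
/-!
Expand every `f (x₀ + i k)` by Taylor's theorem at `x₀` to order `n` with Lagrange remainder.
The `n`-th finite difference `∑ (-1)ⁱ C(n,i) iʲ` of `i ↦ iʲ` vanishes for `j < n` and equals
`(-1)ⁿ n!` for `j = n`, so the alternating binomial sum of the Taylor polynomials collapses to
`f⁽ⁿ⁾(x₀) (-k)ⁿ`, and only the remainders are left.
-/

open Finset Set

theorem sum_range_choose_mul_neg_one_pow_mul_pow {R : Type*} [CommRing R] {n j : ℕ} (hj : j ≤ n) :
    ∑ i ∈ range (n + 1), (n.choose i : R) * (-1) ^ i * (i : R) ^ j =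
      if j = n then (-1) ^ n * (n.factorial : R) else 0 := by
  have hsign : ∀ i ∈ range (n + 1), (n.choose i : R) * (-1) ^ i * (i : R) ^ j =
      (-1) ^ n * (((-1 : ℤ) ^ (n - i) * n.choose i) • (fun r : R ↦ r ^ j) (0 + i • 1)) := by
    intro i hi
    obtain ⟨m, rfl⟩ := Nat.exists_eq_add_of_le (Nat.lt_succ_iff.mp (mem_range.mp hi))
    have hm : (-1 : R) ^ (m + m) = 1 := Even.neg_one_pow ⟨m, rfl⟩
    simp only [Nat.add_sub_cancel_left, zsmul_eq_mul, nsmul_eq_mul, mul_one, zero_add]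
    push_cast
    linear_combination -((i + m).choose i : R) * (-1) ^ i * (i : R) ^ j * hm
  rw [sum_congr rfl hsign, ← mul_sum,
    ← fwdDiff_iter_eq_sum_shift (h := (1 : R)) (fun r : R ↦ r ^ j) n 0]
  rcases hj.lt_or_eq with hlt | rfl
  · simp [fwdDiff_iter_pow_eq_zero_of_lt hlt, hlt.ne]
  · simp [fwdDiff_iter_eq_factorial]

theorem sum_range_choose_mul_neg_one_pow_mul_sum_pow {R : Type*} [CommRing R] (n : ℕ)
    (c : ℕ → R) (k : R) :
    ∑ i ∈ range (n + 1),
        (n.choose i : R) * (-1) ^ i * ∑ j ∈ range (n + 1), c j * ((i : R) * k) ^ j =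
      n.factorial * c n * (-k) ^ n := by
  have hinner : ∀ j ∈ range (n + 1),
      ∑ i ∈ range (n + 1), (n.choose i : R) * (-1) ^ i * (c j * ((i : R) * k) ^ j) =
        c j * k ^ j * if j = n then (-1) ^ n * (n.factorial : R) else 0 := by
    intro j hj
    rw [← sum_range_choose_mul_neg_one_pow_mul_pow (mem_range_succ_iff.mp hj), mul_sum]
    exact sum_congr rfl fun i _ ↦ by ring
  simp_rw [mul_sum]
  rw [sum_comm, sum_congr rfl hinner]
  simp only [mul_ite, mul_zero, sum_ite_eq', self_mem_range_succ, if_true, neg_pow k]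
  ring

theorem iteratedDerivWithin_eqOn_iteratedDeriv {𝕜 F : Type*} [NontriviallyNormedField 𝕜]
    [NormedAddCommGroup F] [NormedSpace 𝕜 F] {f : 𝕜 → F} {U s : Set 𝕜} {n m : ℕ}
    (hU : IsOpen U) (hsU : s ⊆ U) (hs : UniqueDiffOn 𝕜 s)
    (hf : ∀ i < n, DifferentiableOn 𝕜 (iteratedDeriv i f) U) (hm : m ≤ n) :
    EqOn (iteratedDerivWithin m f s) (iteratedDeriv m f) s := by
  induction m with
  | zero => simp [EqOn]
  | succ m ih =>
    intro x hx
    have hdiff : DifferentiableAt 𝕜 (iteratedDeriv m f) x :=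
      (hf m hm).differentiableAt (hU.mem_nhds (hsU hx))
    rw [iteratedDerivWithin_succ, derivWithin_congr (ih (by omega)) (ih (by omega) hx),
      hdiff.derivWithin (hs x hx), iteratedDeriv_succ]

/-- Unlike `taylor_mean_remainder_lagrange_iteratedDeriv`, this needs `f⁽ⁿ⁾` only differentiable,
not `f` of class `C^(n+1)`. -/
theorem taylor_mean_remainder_lagrange_of_isOpen {f : ℝ → ℝ} {U : Set ℝ} {n : ℕ} {x₀ x : ℝ}
    (hU : IsOpen U) (hf : ∀ i ≤ n, DifferentiableOn ℝ (iteratedDeriv i f) U)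
    (hx : x₀ ≠ x) (hsub : uIcc x₀ x ⊆ U) :
    ∃ x' ∈ uIoo x₀ x, f x = ∑ j ∈ range (n + 1), iteratedDeriv j f x₀ / j.factorial * (x - x₀) ^ j +
      iteratedDeriv (n + 1) f x' / (n + 1).factorial * (x - x₀) ^ (n + 1) := by
  have heq : ∀ {m}, m ≤ n + 1 →
      EqOn (iteratedDerivWithin m f (uIcc x₀ x)) (iteratedDeriv m f) (uIcc x₀ x) :=
    iteratedDerivWithin_eqOn_iteratedDeriv hU hsub (uniqueDiffOn_uIcc hx)
      fun i hi ↦ hf i (Nat.lt_succ_iff.mp hi)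
  have hcont : ContDiffOn ℝ n f (uIcc x₀ x) := contDiffOn_of_differentiableOn_deriv fun m hm ↦
    ((hf m (by exact_mod_cast hm)).mono hsub).congr (heq (by norm_cast at hm; omega))
  have hdiff : DifferentiableOn ℝ (iteratedDerivWithin n f (uIcc x₀ x)) (uIoo x₀ x) :=
    ((hf n le_rfl).mono (uIoo_subset_uIcc_self.trans hsub)).congr
      fun y hy ↦ heq n.le_succ (uIoo_subset_uIcc_self hy)
  obtain ⟨x', hx', h⟩ := taylor_mean_remainder_lagrange hx hcont hdiff
  refine ⟨x', hx', ?_⟩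
  rw [heq le_rfl (uIoo_subset_uIcc_self hx'), taylor_within_apply] at h
  have htaylor : ∑ j ∈ range (n + 1),
      ((j.factorial : ℝ)⁻¹ * (x - x₀) ^ j) • iteratedDerivWithin j f (uIcc x₀ x) x₀ =
        ∑ j ∈ range (n + 1), iteratedDeriv j f x₀ / j.factorial * (x - x₀) ^ j :=
    sum_congr rfl fun j hj ↦ by
      rw [heq (by have := mem_range.mp hj; omega) left_mem_uIcc, smul_eq_mul]
      ring
  rw [htaylor, sub_eq_iff_eq_add'] at h
  rw [h]
  ring

/-- The case x = x₀ of the finite-difference representation of fⁿ with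
Lagrange error terms. -/
theorem stmt_17 (n : ℕ) (a b : ℝ) (f : ℝ → ℝ)
    (hf : ∀ i ≤ n, DifferentiableOn ℝ (iteratedDeriv i f) (Set.Ioo a b))
    (x₀ : ℝ) (hx₀ : x₀ ∈ Set.Ioo a b) (k : ℝ) (hk : k ≠ 0)
    (hmem : ∀ i ≤ n, x₀ + (i : ℝ) * k ∈ Set.Ioo a b) :
    ∃ ξ : ℕ → ℝ,
      (∀ i, 1 ≤ i → i ≤ n →
        ξ i ∈ Set.Ioo (min x₀ (x₀ + (i : ℝ) * k)) (max x₀ (x₀ + (i : ℝ) * k))) ∧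
      iteratedDeriv n f x₀ * (-k) ^ n =
        (∑ i ∈ Finset.range (n + 1), (n.choose i : ℝ) * (-1) ^ i * f (x₀ + (i : ℝ) * k)) -
        ∑ i ∈ Finset.Icc 1 n, (n.choose i : ℝ) * (-1) ^ i *
          (iteratedDeriv (n + 1) f (ξ i) / ((n + 1).factorial : ℝ)) *
          ((i : ℝ) * k) ^ (n + 1) := by
  have htaylor : ∀ i ∈ range (n + 1), ∃ ξ, (1 ≤ i →
      ξ ∈ Ioo (min x₀ (x₀ + (i : ℝ) * k)) (max x₀ (x₀ + (i : ℝ) * k))) ∧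
      f (x₀ + i * k) = ∑ j ∈ range (n + 1), iteratedDeriv j f x₀ / j.factorial * (i * k) ^ j +
        iteratedDeriv (n + 1) f ξ / (n + 1).factorial * (i * k) ^ (n + 1) := by
    intro i hi
    rcases Nat.eq_zero_or_pos i with rfl | hpos
    -- at `i = 0` the expansion is exact, so `ξ 0` is arbitrary
    · exact ⟨x₀, by omega, by simp [sum_range_succ']⟩
    have hne : x₀ ≠ x₀ + i * k := by simp [hk, hpos.ne']
    obtain ⟨ξ, hξ, h⟩ := taylor_mean_remainder_lagrange_of_isOpen isOpen_Ioo hf hne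
      (ordConnected_Ioo.uIcc_subset hx₀ (hmem i (mem_range_succ_iff.mp hi)))
    exact ⟨ξ, fun _ ↦ hξ, by simpa using h⟩
  choose! ξ hξ hfξ using htaylor
  refine ⟨ξ, fun i h1 h2 ↦ hξ i (mem_range_succ_iff.mpr h2) h1, ?_⟩
  have hremainder : ∀ g : ℕ → ℝ, ∑ i ∈ range (n + 1), g i * ((i : ℝ) * k) ^ (n + 1) =
      ∑ i ∈ Icc 1 n, g i * ((i : ℝ) * k) ^ (n + 1) := fun g ↦ by
    rw [Nat.range_succ_eq_Icc_zero, ← Finset.insert_Icc_add_one_left_eq_Icc n.zero_le,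
      sum_insert (by simp)]
    simp
  rw [sum_congr rfl fun i hi ↦ congrArg _ (hfξ i hi)]
  simp only [mul_add, sum_add_distrib, sum_range_choose_mul_neg_one_pow_mul_sum_pow, ← mul_assoc]
  rw [hremainder]
  field_simp
  ring
end

section
/- For all positive integers n ≥ 3 and positive integers x, y, z with x > y and y·(2^{1/n} − 1) < 1, the real number ((x)ⁿ + (y)ⁿ)^{1/n} is not an integer. -/
/-- `(a+1)^n = (∑ k in range n, a^k * C(n,k)) + a^n`, so the "difference"
`(a+1)^n - a^n` is monotone in `a`. -/
lemma aux_succ_pow (n a : ℕ) :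
    (a + 1) ^ n = (∑ k ∈ Finset.range n, a ^ k * n.choose k) + a ^ n := by
  have := (Commute.all (a : ℕ) 1).add_pow n
  simp only [one_pow, mul_one] at this
  rw [this, Finset.sum_range_succ]
  simp

lemma aux_mono (n x y : ℕ) (h : y ≤ x) :
    (y + 1) ^ n + x ^ n ≤ (x + 1) ^ n + y ^ n := by
  rw [aux_succ_pow, aux_succ_pow]
  have hs : (∑ k ∈ Finset.range n, y ^ k * n.choose k)
      ≤ ∑ k ∈ Finset.range n, x ^ k * n.choose k := by
    apply Finset.sum_le_sum
    intro k _
    exact Nat.mul_le_mul_right _ (Nat.pow_le_pow_left h k)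
  omega

/-- Under the hypotheses of the partial Fermat result, (xⁿ + yⁿ)^(1/n) is not an integer. -/
theorem stmt_18 (n x y : ℕ) (hn : 3 ≤ n) (hy : 0 < y) (hxy : y < x)
    (hbound : (y : ℝ) * ((2 : ℝ) ^ ((1 : ℝ) / n) - 1) < 1) :
    ¬ ∃ m : ℤ, ((x : ℝ) ^ n + (y : ℝ) ^ n) ^ ((1 : ℝ) / n) = m := by
  rintro ⟨m, hm⟩
  have hn0 : (n : ℝ) ≠ 0 := by positivity
  have hx0 : (0 : ℝ) < x := by exact_mod_cast hy.trans hxy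
  have hy0 : (0 : ℝ) < y := by exact_mod_cast hy
  have hA : (0 : ℝ) < (x : ℝ) ^ n + (y : ℝ) ^ n := by positivity
  -- 2 y^n < (y+1)^n
  have hroot : ((2 : ℝ) ^ ((1 : ℝ) / n)) ^ n = 2 := by
    rw [← Real.rpow_natCast ((2:ℝ) ^ ((1:ℝ)/n)) n, ← Real.rpow_mul (by norm_num),
      one_div, inv_mul_cancel₀ hn0, Real.rpow_one]
  have hb' : (y : ℝ) * (2 : ℝ) ^ ((1 : ℝ) / n) < (y : ℝ) + 1 := by nlinarith
  have h2y : 2 * (y : ℝ) ^ n < ((y : ℝ) + 1) ^ n := by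
    have := pow_lt_pow_left₀ hb' (by positivity) (by omega : n ≠ 0)
    rwa [mul_pow, hroot, mul_comm] at this
  -- m^n = x^n + y^n
  have hmn : ((m : ℝ)) ^ n = (x : ℝ) ^ n + (y : ℝ) ^ n := by
    have : (((x : ℝ) ^ n + (y : ℝ) ^ n) ^ ((1 : ℝ) / n)) ^ n
        = (x : ℝ) ^ n + (y : ℝ) ^ n := by
      rw [← Real.rpow_natCast _ n, ← Real.rpow_mul hA.le, one_div,
        inv_mul_cancel₀ hn0, Real.rpow_one]
    rw [hm] at this
    exact this
  have hm0 : (0 : ℝ) ≤ (m : ℝ) := by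
    rw [← hm]; positivity
  -- x < m
  have hxm : (x : ℝ) < (m : ℝ) := by
    by_contra hle
    push_neg at hle
    have h1 : (m : ℝ) ^ n ≤ (x : ℝ) ^ n := pow_le_pow_left₀ hm0 hle n
    have h2 : (0:ℝ) < (y:ℝ) ^ n := by positivity
    linarith
  have hxm' : (x : ℤ) < m := by exact_mod_cast hxm
  have hx1m : ((x : ℝ) + 1) ≤ (m : ℝ) := by
    have : (x : ℤ) + 1 ≤ m := hxm'
    exact_mod_cast this
  have hpow : ((x : ℝ) + 1) ^ n ≤ (m : ℝ) ^ n :=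
    pow_le_pow_left₀ (by positivity) hx1m n
  -- monotone difference, cast to ℝ
  have hmono : ((y : ℝ) + 1) ^ n + (x : ℝ) ^ n ≤ ((x : ℝ) + 1) ^ n + (y : ℝ) ^ n := by
    have := aux_mono n x y hxy.le
    exact_mod_cast this
  nlinarith
end
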